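/- Let p be prime, and f: Z_p^{N+1} → Z_p^m given by m homogeneous polynomials each of degree d. Denote by A(p^r) the number of all x ∈ (Z/p^r Z)^{N+1} with f(x) ≡ 0 (mod p^r), and by N*(p^r) the number of such x with not all coordinates divisible by p. If the limits exist, then lim_{r→∞} A(p^r)/p^{r(N+1-m)} = (1 - p^{-δ})^{-1} · lim_{r→∞} N*(p^r)/p^{r(N+1-m)}, where δ = N + 1 - m·d > 0. -/
import Mathlib

open MvPolynomial

section Aux

variable {p : ℕ}

/-- Evaluation of a homogeneous polynomial at a scaled point. -/
lemma aux_eval_smul_homog {S : Type*} [CommRing S] {n dd : ℕ}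
    {P : MvPolynomial (Fin n) S} (hP : P.IsHomogeneous dd) (c : S) (x : Fin n → S) :
    eval (fun i => c * x i) P = c ^ dd * eval x P := by
  rw [eval_eq', eval_eq', Finset.mul_sum]
  refine Finset.sum_congr rfl fun k hk => ?_
  have hw := hP (mem_support_iff.mp hk)
  have hdeg : ∑ i, k i = dd := by
    rw [← hw, Finsupp.weight_apply, Finsupp.sum]
    simp only [smul_eq_mul, Pi.one_apply, mul_one]
    exact (Finset.sum_subset (Finset.subset_univ _)
      (fun i _ hi => Finsupp.notMem_support_iff.mp hi)).symm
  simp_rw [mul_pow]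
  rw [Finset.prod_mul_distrib, Finset.prod_pow_eq_pow_sum, hdeg]
  ring

lemma aux_pd_mul_eq_zero_iff (hp : p.Prime) (r dd : ℕ) (t : ZMod (p ^ (r + dd))) :
    (p : ZMod (p ^ (r + dd))) ^ dd * t = 0 ↔ ((t.val : ZMod (p ^ r)) = 0) := by
  haveI : NeZero (p ^ (r + dd)) := ⟨pow_ne_zero _ hp.ne_zero⟩
  conv_lhs => rw [← ZMod.natCast_zmod_val t]
  rw [show ((p : ZMod (p ^ (r + dd))) ^ dd * (t.val : ZMod (p ^ (r + dd))) =
      ((p ^ dd * t.val : ℕ) : ZMod (p ^ (r + dd)))) by push_cast; ring]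
  rw [ZMod.natCast_eq_zero_iff, ZMod.natCast_eq_zero_iff]
  generalize t.val = v
  rw [show p ^ (r + dd) = p ^ dd * p ^ r from by rw [← pow_add, add_comm]]
  exact Nat.mul_dvd_mul_iff_left (pow_pos hp.pos dd)

/-- Splitting `ZMod (p^(a+b))` as a set into `ZMod (p^a) × ZMod (p^b)`, first
component being reduction mod `p^a`. -/
def auxSplitEquiv (hp : p.Prime) (a b : ℕ) : ZMod (p ^ (a + b)) ≃ ZMod (p ^ a) × ZMod (p ^ b) where
  toFun w := ((w.val : ZMod (p ^ a)), ((w.val / p ^ a : ℕ) : ZMod (p ^ b)))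
  invFun zu := ((zu.1.val + p ^ a * zu.2.val : ℕ) : ZMod (p ^ (a + b)))
  left_inv w := by
    haveI : NeZero (p ^ (a + b)) := ⟨pow_ne_zero _ hp.ne_zero⟩
    haveI : NeZero (p ^ a) := ⟨pow_ne_zero _ hp.ne_zero⟩
    haveI : NeZero (p ^ b) := ⟨pow_ne_zero _ hp.ne_zero⟩
    have h1 : w.val < p ^ a * p ^ b := by rw [← pow_add]; exact ZMod.val_lt w
    have hdiv : w.val / p ^ a < p ^ b := Nat.div_lt_of_lt_mul h1
    simp only [ZMod.val_natCast]
    rw [Nat.mod_eq_of_lt hdiv, Nat.mod_add_div, ZMod.natCast_zmod_val]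
  right_inv := by
    rintro ⟨z, u⟩
    haveI : NeZero (p ^ (a + b)) := ⟨pow_ne_zero _ hp.ne_zero⟩
    haveI : NeZero (p ^ a) := ⟨pow_ne_zero _ hp.ne_zero⟩
    haveI : NeZero (p ^ b) := ⟨pow_ne_zero _ hp.ne_zero⟩
    have hz : z.val < p ^ a := ZMod.val_lt z
    have hu : u.val < p ^ b := ZMod.val_lt u
    have hlt : z.val + p ^ a * u.val < p ^ (a + b) := by
      rw [pow_add]
      calc z.val + p ^ a * u.val < p ^ a + p ^ a * u.val := by omega
        _ = p ^ a * (u.val + 1) := by ring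
        _ ≤ p ^ a * p ^ b := Nat.mul_le_mul_left _ (by omega)
    have hval : ((z.val + p ^ a * u.val : ℕ) : ZMod (p ^ (a + b))).val
        = z.val + p ^ a * u.val := ZMod.val_natCast_of_lt hlt
    ext
    · show ((((z.val + p ^ a * u.val : ℕ) : ZMod (p ^ (a + b))).val : ZMod (p ^ a))) = z
      rw [hval]
      push_cast
      rw [← Nat.cast_pow, ZMod.natCast_self]
      simp [ZMod.natCast_zmod_val]
    · show ((((z.val + p ^ a * u.val : ℕ) : ZMod (p ^ (a + b))).val / p ^ a : ℕ) : ZMod (p ^ b)) = u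
      rw [hval, Nat.add_mul_div_left _ _ (pow_pos hp.pos a), Nat.div_eq_of_lt hz]
      simp [ZMod.natCast_zmod_val]

/-- Multiplication by `p` identifies `ZMod (p^c)` with the multiples of `p`
in `ZMod (p^(c+1))`. -/
noncomputable def auxDivEquiv (hp : p.Prime) (c : ℕ) :
    ZMod (p ^ c) ≃ {x : ZMod (p ^ (c + 1)) // ∃ w, x = (p : ZMod (p ^ (c + 1))) * w} := by
  haveI : NeZero (p ^ (c + 1)) := ⟨pow_ne_zero _ hp.ne_zero⟩
  haveI : NeZero (p ^ c) := ⟨pow_ne_zero _ hp.ne_zero⟩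
  refine Equiv.ofBijective
    (fun y => ⟨(p : ZMod (p ^ (c+1))) * (y.val : ZMod (p ^ (c+1))), _, rfl⟩) ⟨?_, ?_⟩
  · intro y y' h
    have h' : ((p * y.val : ℕ) : ZMod (p ^ (c+1))) = ((p * y'.val : ℕ) : ZMod (p ^ (c+1))) := by
      push_cast
      simpa using h
    have hy : p * y.val < p ^ (c+1) := by
      rw [pow_succ, mul_comm (p ^ c) p]
      exact (Nat.mul_lt_mul_left hp.pos).mpr (ZMod.val_lt y)
    have hy' : p * y'.val < p ^ (c+1) := by
      rw [pow_succ, mul_comm (p ^ c) p]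
      exact (Nat.mul_lt_mul_left hp.pos).mpr (ZMod.val_lt y')
    have := congrArg ZMod.val h'
    rw [ZMod.val_natCast_of_lt hy, ZMod.val_natCast_of_lt hy'] at this
    have : y.val = y'.val := Nat.eq_of_mul_eq_mul_left hp.pos this
    exact ZMod.val_injective _ this
  · rintro ⟨x, w, rfl⟩
    refine ⟨((w.val : ℕ) : ZMod (p ^ c)), ?_⟩
    apply Subtype.ext
    show (p : ZMod (p ^ (c+1))) * ((((w.val : ℕ) : ZMod (p ^ c)).val : ℕ) : ZMod (p ^ (c+1)))
        = (p : ZMod (p ^ (c+1))) * w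
    rw [ZMod.val_natCast]
    conv_rhs => rw [← ZMod.natCast_zmod_val w]
    have hdecomp0 : ∀ v : ℕ, p * v = p ^ (c+1) * (v / p ^ c) + p * (v % p ^ c) := by
      intro v
      calc p * v = p * (p ^ c * (v / p ^ c) + v % p ^ c) := by rw [Nat.div_add_mod]
        _ = p ^ (c+1) * (v / p ^ c) + p * (v % p ^ c) := by rw [pow_succ]; ring
    have hdecomp := hdecomp0 w.val
    have hkey : ((p * (w.val % p ^ c) : ℕ) : ZMod (p ^ (c+1)))
        = ((p * w.val : ℕ) : ZMod (p ^ (c+1))) := by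
      rw [hdecomp]
      push_cast
      rw [← Nat.cast_pow, ZMod.natCast_self]
      ring
    push_cast at hkey
    exact hkey.trans (by push_cast; ring)

end Aux

section Key

variable {p : ℕ}

/-- The key counting identity: `A(p^{r+d}) = N*(p^{r+d}) + p^{(N+1)(d-1)} A(p^r)`. -/
lemma aux_key (hp : p.Prime) [Fact p.Prime] (n m e : ℕ)
    (F : Fin m → MvPolynomial (Fin n) ℤ_[p]) (hhom : ∀ i, (F i).IsHomogeneous (e + 1)) (r : ℕ) :
    Nat.card {x : Fin n → ZMod (p ^ (r + (e + 1))) //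
        ∀ i, eval x ((F i).map (PadicInt.toZModPow (r + (e + 1)))) = 0}
    = Nat.card {x : Fin n → ZMod (p ^ (r + (e + 1))) //
        (¬ ∀ i, ∃ y, x i = (p : ZMod (p ^ (r + (e + 1)))) * y) ∧
        ∀ i, eval x ((F i).map (PadicInt.toZModPow (r + (e + 1)))) = 0}
    + p ^ (n * e) * Nat.card {z : Fin n → ZMod (p ^ r) //
        ∀ i, eval z ((F i).map (PadicInt.toZModPow r)) = 0} := by
  classical
  haveI : ∀ k, NeZero (p ^ k) := fun k => ⟨pow_ne_zero _ hp.ne_zero⟩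
  set dd := e + 1 with hdd
  set P : (Fin n → ZMod (p ^ (r + dd))) → Prop :=
    fun x => ∀ i, eval x ((F i).map (PadicInt.toZModPow (r + dd))) = 0 with hP
  set Q : (Fin n → ZMod (p ^ (r + dd))) → Prop :=
    fun x => ∀ i, ∃ y, x i = (p : ZMod (p ^ (r + dd))) * y with hQ
  -- Step 1: split into primitive and imprimitive solutions
  have hsplit : Nat.card {x // P x}
      = Nat.card {x // ¬ Q x ∧ P x} + Nat.card {x // Q x ∧ P x} := by
    have e1 : {x // P x} ≃ {t : {x // P x} // ¬ Q t.1} ⊕ {t : {x // P x} // Q t.1} :=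
      ((Equiv.sumCompl (fun t : {x // P x} => Q t.1)).symm.trans (Equiv.sumComm _ _))
    rw [Nat.card_congr e1, Nat.card_sum]
    congr 1
    · exact Nat.card_congr ((Equiv.subtypeSubtypeEquivSubtypeInter P (fun x => ¬ Q x)).trans
        (Equiv.subtypeEquivRight fun x => and_comm))
    · exact Nat.card_congr ((Equiv.subtypeSubtypeEquivSubtypeInter P Q).trans
        (Equiv.subtypeEquivRight fun x => and_comm))
  -- Step 2: the imprimitive solutions
  have hrd : r ≤ r + dd := Nat.le_add_right _ _
  set π : ZMod (p ^ (r + dd)) →+* ZMod (p ^ r) :=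
    ZMod.castHom (pow_dvd_pow p hrd) (ZMod (p ^ r)) with hπ
  set solr : (Fin n → ZMod (p ^ r)) → Prop :=
    fun z => ∀ i, eval z ((F i).map (PadicInt.toZModPow r)) = 0 with hsolr
  have hmapmap : ∀ i, ((F i).map (PadicInt.toZModPow (r + dd))).map π
      = (F i).map (PadicInt.toZModPow r) := by
    intro i
    rw [map_map, PadicInt.zmod_cast_comp_toZModPow r (r + dd) hrd]
  have hcast_eval : ∀ (x : Fin n → ZMod (p ^ (r + dd))) (i : Fin m),
      π (eval x ((F i).map (PadicInt.toZModPow (r + dd))))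
      = eval (fun j => π (x j)) ((F i).map (PadicInt.toZModPow r)) := by
    intro x i
    have h0 : eval x ((F i).map (PadicInt.toZModPow (r + dd)))
        = eval₂ (RingHom.id _) x ((F i).map (PadicInt.toZModPow (r + dd))) := rfl
    conv_rhs => rw [← hmapmap i, eval_map]
    rw [h0, eval₂_comp_left π (RingHom.id _) x, RingHom.comp_id]
    rfl
  -- the key homogeneity computation
  have hE1 : ∀ (y : Fin n → ZMod (p ^ (r + e))),
      (P (fun i => (p : ZMod (p ^ (r + dd))) * (((y i).val : ℕ) : ZMod (p ^ (r + dd))))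
        ↔ solr (fun i => (((y i).val : ℕ) : ZMod (p ^ r)))) := by
    intro y
    simp only [hP, hsolr]
    refine forall_congr' fun i => ?_
    have hhomP : (((F i).map (PadicInt.toZModPow (r + dd)))).IsHomogeneous dd :=
      (hhom i).map _
    rw [aux_eval_smul_homog hhomP]
    set t := eval (fun j => (((y j).val : ℕ) : ZMod (p ^ (r + dd))))
      ((F i).map (PadicInt.toZModPow (r + dd))) with ht
    rw [aux_pd_mul_eq_zero_iff hp r dd t]
    have hπt : ((t.val : ℕ) : ZMod (p ^ r)) = π t := by
      rw [ZMod.natCast_val, ZMod.castHom_apply]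
    rw [hπt, hcast_eval]
    have : (fun j => π ((((y j).val : ℕ) : ZMod (p ^ (r + dd)))))
        = fun j => (((y j).val : ℕ) : ZMod (p ^ r)) := by
      funext j
      rw [map_natCast]
    rw [this]
  have himprim : Nat.card {x // Q x ∧ P x}
      = p ^ (n * e) * Nat.card {z : Fin n → ZMod (p ^ r) // solr z} := by
    -- divide out one factor of p
    set ε := auxDivEquiv hp (r + e) with hε
    let E1 : (Fin n → ZMod (p ^ (r + e))) ≃ {x : Fin n → ZMod (p ^ (r + dd)) // Q x} :=
      { toFun := fun y => ⟨fun i => (ε (y i)).1, fun i => (ε (y i)).2⟩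
        invFun := fun x i => ε.symm ⟨x.1 i, x.2 i⟩
        left_inv := fun y => by
          funext i
          exact ε.symm_apply_apply (y i)
        right_inv := fun x => by
          apply Subtype.ext
          funext i
          exact congrArg Subtype.val (ε.apply_symm_apply ⟨x.1 i, x.2 i⟩) }
    have hE1val : ∀ y, (E1 y).1
        = fun i => (p : ZMod (p ^ (r + dd))) * (((y i).val : ℕ) : ZMod (p ^ (r + dd))) :=
      fun y => rfl
    have E2 : {x // Q x ∧ P x} ≃ {y : Fin n → ZMod (p ^ (r + e)) //
        solr (fun i => (((y i).val : ℕ) : ZMod (p ^ r)))} :=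
      (Equiv.subtypeSubtypeEquivSubtypeInter Q P).symm.trans
        ((E1.subtypeEquiv fun y => by rw [hE1val]; exact (hE1 y).symm).symm)
    set s := auxSplitEquiv hp r e with hs
    have E3 : {y : Fin n → ZMod (p ^ (r + e)) //
          solr (fun i => (((y i).val : ℕ) : ZMod (p ^ r)))}
        ≃ {z : Fin n → ZMod (p ^ r) // solr z} × (Fin n → ZMod (p ^ e)) :=
      { toFun := fun y => (⟨fun i => (s (y.1 i)).1, y.2⟩, fun i => (s (y.1 i)).2)
        invFun := fun zu => ⟨fun i => s.symm (zu.1.1 i, zu.2 i), by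
          have hfst : (fun i => (((s.symm (zu.1.1 i, zu.2 i)).val : ℕ) : ZMod (p ^ r)))
              = fun i => zu.1.1 i := by
            funext i
            exact congrArg Prod.fst (s.apply_symm_apply (zu.1.1 i, zu.2 i))
          rw [hfst]
          exact zu.1.2⟩
        left_inv := fun y => Subtype.ext (funext fun i => s.symm_apply_apply (y.1 i))
        right_inv := fun zu => by
          refine Prod.ext (Subtype.ext (funext fun i => ?_)) (funext fun i => ?_)
          · exact congrArg Prod.fst (s.apply_symm_apply (zu.1.1 i, zu.2 i))
          · exact congrArg Prod.snd (s.apply_symm_apply (zu.1.1 i, zu.2 i)) }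
    rw [Nat.card_congr (E2.trans E3), Nat.card_prod, Nat.card_pi]
    simp only [Nat.card_zmod, Finset.prod_const, Finset.card_univ, Fintype.card_fin]
    ring
  rw [hsplit, himprim]

end Key

/-- Let `p` be prime and `f : ℤ_p^{N+1} → ℤ_p^m` given by `m` homogeneous polynomials
of degree `d`.  Let `A(p^r)` count all solutions of `f(x) ≡ 0 (mod p^r)` and `N*(p^r)`
those with not all coordinates divisible by `p`.  If the limits of
`A(p^r)/p^{r(N+1-m)}` and `N*(p^r)/p^{r(N+1-m)}` exist, then the former equals
`(1 - p^{-δ})⁻¹` times the latter, where `δ = N + 1 - m d > 0`. -/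
theorem total_density_eq_primitive_density (p : ℕ) (hp : p.Prime) [Fact p.Prime]
    (N m d : ℕ) (hm : 1 ≤ m) (hd : 1 ≤ d) (hδ : m * d < N + 1)
    (F : Fin m → MvPolynomial (Fin (N + 1)) ℤ_[p])
    (hhom : ∀ i, (F i).IsHomogeneous d)
    (A Nstar : ℕ → ℕ)
    (hA : ∀ r : ℕ, A r = Nat.card {x : Fin (N + 1) → ZMod (p ^ r) //
        ∀ i, MvPolynomial.eval x ((F i).map (PadicInt.toZModPow r)) = 0})
    (hNstar : ∀ r : ℕ, Nstar r = Nat.card {x : Fin (N + 1) → ZMod (p ^ r) //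
        (¬ ∀ i, ∃ y : ZMod (p ^ r), x i = (p : ZMod (p ^ r)) * y) ∧
        ∀ i, MvPolynomial.eval x ((F i).map (PadicInt.toZModPow r)) = 0})
    (LA LN : ℝ)
    (hLA : Filter.Tendsto (fun r : ℕ => (A r : ℝ) / (p : ℝ) ^ (r * (N + 1 - m)))
      Filter.atTop (nhds LA))
    (hLN : Filter.Tendsto (fun r : ℕ => (Nstar r : ℝ) / (p : ℝ) ^ (r * (N + 1 - m)))
      Filter.atTop (nhds LN)) :
    LA = (1 - ((p : ℝ) ^ (N + 1 - m * d))⁻¹)⁻¹ * LN := by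
  obtain ⟨e, rfl⟩ : ∃ e, d = e + 1 := ⟨d - 1, by omega⟩
  set τ := N + 1 - m with hτ
  set δ := N + 1 - m * (e + 1) with hδ'
  -- the counting recursion
  have hkey : ∀ r : ℕ, A (r + (e + 1)) = Nstar (r + (e + 1)) + p ^ ((N + 1) * e) * A r := by
    intro r
    rw [hA, hNstar, hA]
    exact aux_key hp (N + 1) m e F hhom r
  -- exponent identity
  have hm1 : m ≤ N + 1 := le_trans (Nat.le_mul_of_pos_right m (by omega)) hδ.le
  have hexp : ∀ r : ℕ, (r + (e + 1)) * τ = r * τ + ((N + 1) * e + δ) := by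
    intro r
    rw [hτ, hδ']
    zify [hm1, hδ.le]
    ring
  have hppos : (0 : ℝ) < (p : ℝ) := by exact_mod_cast hp.pos
  have hppow : ∀ k : ℕ, (0 : ℝ) < (p : ℝ) ^ k := fun k => pow_pos hppos k
  -- rewrite the shifted sequence
  have hfun : ∀ r : ℕ, (A (r + (e + 1)) : ℝ) / (p : ℝ) ^ ((r + (e + 1)) * τ)
      = (Nstar (r + (e + 1)) : ℝ) / (p : ℝ) ^ ((r + (e + 1)) * τ)
        + ((p : ℝ) ^ δ)⁻¹ * ((A r : ℝ) / (p : ℝ) ^ (r * τ)) := by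
    intro r
    have h1 : ((p : ℝ)) ^ (r * τ) ≠ 0 := (hppow _).ne'
    have h2 : ((p : ℝ)) ^ ((N + 1) * e) ≠ 0 := (hppow _).ne'
    have h3 : ((p : ℝ)) ^ δ ≠ 0 := (hppow _).ne'
    rw [hkey r, hexp r, pow_add, pow_add]
    push_cast
    field_simp
  -- limits
  have hshift : Filter.Tendsto (fun r : ℕ => r + (e + 1)) Filter.atTop Filter.atTop :=
    Filter.tendsto_add_atTop_nat (e + 1)
  have hLA' : Filter.Tendsto
      (fun r : ℕ => (A (r + (e + 1)) : ℝ) / (p : ℝ) ^ ((r + (e + 1)) * τ))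
      Filter.atTop (nhds LA) := hLA.comp hshift
  have hLN' : Filter.Tendsto
      (fun r : ℕ => (Nstar (r + (e + 1)) : ℝ) / (p : ℝ) ^ ((r + (e + 1)) * τ))
      Filter.atTop (nhds LN) := hLN.comp hshift
  have hcomb : Filter.Tendsto
      (fun r : ℕ => (A (r + (e + 1)) : ℝ) / (p : ℝ) ^ ((r + (e + 1)) * τ))
      Filter.atTop (nhds (LN + ((p : ℝ) ^ δ)⁻¹ * LA)) := by
    have := hLN'.add ((hLA.const_mul (((p : ℝ) ^ δ)⁻¹)))
    exact this.congr fun r => (hfun r).symm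
  have heq : LA = LN + ((p : ℝ) ^ δ)⁻¹ * LA := tendsto_nhds_unique hLA' hcomb
  -- solve the linear equation
  have hδpos : 1 ≤ δ := by omega
  have hplt : (1 : ℝ) < (p : ℝ) ^ δ := by
    calc (1 : ℝ) < (p : ℝ) := by exact_mod_cast hp.one_lt
      _ ≤ (p : ℝ) ^ δ := le_self_pow₀ (by exact_mod_cast hp.one_lt.le) (by omega)
  have hne : (1 : ℝ) - ((p : ℝ) ^ δ)⁻¹ ≠ 0 := by
    have : ((p : ℝ) ^ δ)⁻¹ < 1 := inv_lt_one_of_one_lt₀ hplt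
    linarith
  have h2 : LA * (1 - ((p : ℝ) ^ δ)⁻¹) = LN := by linear_combination heq
  rw [← h2, mul_comm LA, ← mul_assoc, inv_mul_cancel₀ hne, one_mul]
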